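/- Properties of S_{n,r} and B_{n,r}: Let n be a nonnegative integer, m a positive integer, and r = 2⌈(1/4)log₂(4m+1)⌉ + 1. Define P_n(z) = (z − 1)·∏_{i=1}^n (z − 2^i)², A_{n,r}(z) = P_n(z)^r − P_n(−z)^r, B_{n,r}(z) = −P_n(z)^r − P_n(−z)^r, and S_{n,r}(z) = A_{n,r}(z)/B_{n,r}(z). Then: (1) for all z ∈ [1, 2^n], S_{n,r}(z) ∈ [1, 1 + 1/(2m)]; (2) for all z ∈ [−2^n, −1], S_{n,r}(z) ∈ [−1 − 1/(2m), −1]; (3) for all z ∈ [−1, 1], |S_{n,r}(z)| ≤ 1; and (4) for all z ∈ [−2^n, 2^n], B_{n,r}(z) ≥ (1 − 1/(4m+1))·2^{n(n+1)r} > 0 (so that S_{n,r} is well defined on [−2^n, 2^n]). -/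
import Mathlib


open Finset

/-- The univariate polynomial function `P_n(z) = (z − 1)·∏_{i=1}^n (z − 2^i)²`. -/
noncomputable def Ppoly (n : ℕ) (z : ℝ) : ℝ :=
  (z - 1) * ∏ i ∈ Finset.Icc 1 n, (z - 2 ^ i) ^ 2

/-- `A_{n,r}(z) = P_n(z)^r − P_n(−z)^r`. -/
noncomputable def Apoly (n r : ℕ) (z : ℝ) : ℝ := Ppoly n z ^ r - Ppoly n (-z) ^ r

/-- `B_{n,r}(z) = −P_n(z)^r − P_n(−z)^r`. -/
noncomputable def Bpoly (n r : ℕ) (z : ℝ) : ℝ := -(Ppoly n z ^ r) - Ppoly n (-z) ^ r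

/-- `S_{n,r}(z) = A_{n,r}(z)/B_{n,r}(z)`. -/
noncomputable def Sfn (n r : ℕ) (z : ℝ) : ℝ := Apoly n r z / Bpoly n r z

lemma P_neg (n : ℕ) (z : ℝ) :
    Ppoly n (-z) = -((z + 1) * ∏ i ∈ Finset.Icc 1 n, (z + 2 ^ i) ^ 2) := by
  unfold Ppoly
  rw [show (∏ i ∈ Finset.Icc 1 n, (-z - 2 ^ i) ^ 2 : ℝ)
      = ∏ i ∈ Finset.Icc 1 n, (z + 2 ^ i) ^ 2 from
    Finset.prod_congr rfl fun i _ => by ring]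
  ring

lemma gauss (n : ℕ) : ∑ i ∈ Finset.Icc 1 n, 2 * i = n * (n + 1) := by
  induction n with
  | zero => simp
  | succ n ih =>
      rw [Finset.sum_Icc_succ_top (by omega), ih]; ring

lemma Q_ge (n : ℕ) (z : ℝ) (hz : 0 ≤ z) :
    (2 : ℝ) ^ (n * (n + 1)) ≤ (z + 1) * ∏ i ∈ Finset.Icc 1 n, (z + 2 ^ i) ^ 2 := by
  have h1 : (2 : ℝ) ^ (n * (n + 1)) = ∏ i ∈ Finset.Icc 1 n, ((2 : ℝ) ^ i) ^ 2 := by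
    have : ∀ i ∈ Finset.Icc 1 n, ((2:ℝ) ^ i) ^ 2 = 2 ^ (2 * i) := by
      intro i _; rw [← pow_mul, Nat.mul_comm i 2]
    rw [Finset.prod_congr rfl this, Finset.prod_pow_eq_pow_sum, gauss]
  have h2 : ∏ i ∈ Finset.Icc 1 n, ((2 : ℝ) ^ i) ^ 2
      ≤ ∏ i ∈ Finset.Icc 1 n, (z + 2 ^ i) ^ 2 := by
    apply Finset.prod_le_prod
    · intro i _; positivity
    · intro i _
      have h2i : (0:ℝ) ≤ 2 ^ i := by positivity
      nlinarith
  have h3 : (0:ℝ) ≤ ∏ i ∈ Finset.Icc 1 n, (z + 2 ^ i) ^ 2 :=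
    Finset.prod_nonneg fun i _ => sq_nonneg _
  nlinarith

lemma P_nonneg (n : ℕ) (z : ℝ) (hz : 1 ≤ z) : 0 ≤ Ppoly n z :=
  mul_nonneg (by linarith) (Finset.prod_nonneg fun i _ => sq_nonneg _)

lemma P_nonpos (n : ℕ) (z : ℝ) (hz : z ≤ 1) : Ppoly n z ≤ 0 :=
  mul_nonpos_of_nonpos_of_nonneg (by linarith) (Finset.prod_nonneg fun i _ => sq_nonneg _)

lemma ratio (n : ℕ) (z : ℝ) (hz1 : 1 ≤ z) (hz2 : z ≤ 2 ^ n) :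
    4 * Ppoly n z ≤ (z + 1) * ∏ i ∈ Finset.Icc 1 n, (z + 2 ^ i) ^ 2 := by
  have hQ0 : (0:ℝ) ≤ (z + 1) * ∏ i ∈ Finset.Icc 1 n, (z + 2 ^ i) ^ 2 :=
    mul_nonneg (by linarith) (Finset.prod_nonneg fun i _ => sq_nonneg _)
  rcases eq_or_lt_of_le hz2 with heq | hlt
  · -- z = 2^n : Ppoly n z = 0
    have hP0 : Ppoly n z = 0 := by
      rcases Nat.eq_zero_or_pos n with h0 | hn
      · subst h0; simp at heq; unfold Ppoly; rw [heq]; simp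
      · unfold Ppoly
        rw [Finset.prod_eq_zero (Finset.mem_Icc.mpr ⟨hn, le_refl n⟩)
          (by rw [heq]; ring)]
        ring
    rw [hP0]; linarith
  · -- z < 2^n ; pick k = Nat.log 2 ⌊z⌋₊ + 1
    have hz0 : (0:ℝ) ≤ z := by linarith
    set j := Nat.log 2 ⌊z⌋₊ with hj
    have hfl1 : 1 ≤ ⌊z⌋₊ := Nat.le_floor (by exact_mod_cast hz1)
    have hlow : (2:ℝ) ^ j ≤ z := by
      have := Nat.pow_log_le_self 2 (by omega : ⌊z⌋₊ ≠ 0)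
      calc (2:ℝ) ^ j = ((2 ^ j : ℕ) : ℝ) := by push_cast; ring
        _ ≤ (⌊z⌋₊ : ℝ) := by exact_mod_cast this
        _ ≤ z := Nat.floor_le hz0
    have hhigh : z < (2:ℝ) ^ (j + 1) := by
      have h1 := Nat.lt_pow_succ_log_self (by norm_num : 1 < 2) ⌊z⌋₊
      calc z < (⌊z⌋₊ : ℝ) + 1 := Nat.lt_floor_add_one z
        _ ≤ ((2 ^ (j+1) : ℕ) : ℝ) := by exact_mod_cast h1
        _ = (2:ℝ) ^ (j + 1) := by push_cast; ring
    have hkn : j + 1 ≤ n := by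
      by_contra h
      have hn : n ≤ j := by omega
      have : (2:ℝ) ^ n ≤ 2 ^ j := pow_le_pow_right₀ one_le_two hn
      linarith
    set k := j + 1 with hk
    have hkmem : k ∈ Finset.Icc 1 n := Finset.mem_Icc.mpr ⟨by omega, hkn⟩
    have h2k : (2:ℝ) ^ k = 2 * 2 ^ j := by rw [hk, pow_succ]; ring
    have hkey : 4 * (z - 2 ^ k) ^ 2 ≤ (z + 2 ^ k) ^ 2 := by
      have hp : (0:ℝ) < 2 ^ j := by positivity
      rw [h2k]
      nlinarith [mul_nonneg (sub_nonneg.mpr hlow) (by nlinarith : (0:ℝ) ≤ 4 * 2 ^ j - z)]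
    have hP : 4 * Ppoly n z
        = (z - 1) * ((4 * (z - 2 ^ k) ^ 2) * ∏ i ∈ (Finset.Icc 1 n).erase k, (z - 2 ^ i) ^ 2) := by
      unfold Ppoly
      rw [← Finset.mul_prod_erase _ _ hkmem]; ring
    have hQ : (z + 1) * ∏ i ∈ Finset.Icc 1 n, (z + 2 ^ i) ^ 2
        = (z + 1) * ((z + 2 ^ k) ^ 2 * ∏ i ∈ (Finset.Icc 1 n).erase k, (z + 2 ^ i) ^ 2) := by
      rw [← Finset.mul_prod_erase _ _ hkmem]
    rw [hP, hQ]
    have hprod : ∏ i ∈ (Finset.Icc 1 n).erase k, (z - 2 ^ i) ^ 2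
        ≤ ∏ i ∈ (Finset.Icc 1 n).erase k, (z + 2 ^ i) ^ 2 := by
      apply Finset.prod_le_prod (fun i _ => sq_nonneg _)
      intro i _
      have h2i : (0:ℝ) ≤ 2 ^ i := by positivity
      nlinarith
    have h1 : (0:ℝ) ≤ z - 1 := by linarith
    have h2 : (0:ℝ) ≤ 4 * (z - 2 ^ k) ^ 2 := by positivity
    have h3 : (0:ℝ) ≤ ∏ i ∈ (Finset.Icc 1 n).erase k, (z - 2 ^ i) ^ 2 :=
      Finset.prod_nonneg fun i _ => sq_nonneg _
    gcongr
    linarith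


lemma B_even (n r : ℕ) (z : ℝ) : Bpoly n r (-z) = Bpoly n r z := by
  unfold Bpoly; rw [neg_neg]; ring

lemma S_odd (n r : ℕ) (z : ℝ) : Sfn n r (-z) = -Sfn n r z := by
  have hA : Apoly n r (-z) = -Apoly n r z := by unfold Apoly; rw [neg_neg]; ring
  unfold Sfn
  rw [hA, B_even, neg_div]

set_option maxHeartbeats 1600000 in
/-- Properties of `S_{n,r}` and `B_{n,r}` for `r = 2⌈(1/4)log₂(4m+1)⌉ + 1`:
(1) on `[1, 2^n]`, `S_{n,r} ∈ [1, 1 + 1/(2m)]`; (2) on `[−2^n, −1]`,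
`S_{n,r} ∈ [−1 − 1/(2m), −1]`; (3) on `[−1,1]`, `|S_{n,r}| ≤ 1`;
(4) on `[−2^n, 2^n]`, `B_{n,r} ≥ (1 − 1/(4m+1))·2^{n(n+1)r} > 0`. -/
theorem S_B_properties (n m : ℕ) (hm : 0 < m) (r : ℕ)
    (hr : r = 2 * ⌈(1 / 4 : ℝ) * Real.logb 2 (4 * m + 1)⌉₊ + 1) :
    (∀ z : ℝ, z ∈ Set.Icc (1 : ℝ) (2 ^ n) →
      Sfn n r z ∈ Set.Icc (1 : ℝ) (1 + 1 / (2 * m))) ∧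
    (∀ z : ℝ, z ∈ Set.Icc (-(2 ^ n) : ℝ) (-1) →
      Sfn n r z ∈ Set.Icc (-1 - 1 / (2 * m) : ℝ) (-1)) ∧
    (∀ z : ℝ, z ∈ Set.Icc (-1 : ℝ) 1 → |Sfn n r z| ≤ 1) ∧
    (∀ z : ℝ, z ∈ Set.Icc (-(2 ^ n) : ℝ) (2 ^ n) →
      (1 - 1 / (4 * m + 1)) * 2 ^ (n * (n + 1) * r) ≤ Bpoly n r z ∧ 0 < Bpoly n r z) := by
  have hm1 : (1:ℝ) ≤ (m:ℝ) := by exact_mod_cast hm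
  have hodd : Odd r := by rw [hr]; exact odd_two_mul_add_one _
  have h4m : (1:ℝ) < 4 * (m:ℝ) + 1 := by nlinarith
  have hpow : (4 * (m:ℝ) + 1) ≤ 4 ^ r := by
    set L := Real.logb 2 (4 * (m:ℝ) + 1) with hL
    have hLnn : 0 ≤ L := Real.logb_nonneg one_lt_two (by linarith)
    have hc := Nat.le_ceil ((1 / 4 : ℝ) * L)
    have h2r : L ≤ ((2 * r : ℕ) : ℝ) := by
      rw [hr]; push_cast; nlinarith
    have heq : (4 * (m:ℝ) + 1) = (2:ℝ) ^ L :=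
      (Real.rpow_logb (by norm_num) (by norm_num) (by linarith)).symm
    calc (4 * (m:ℝ) + 1) = (2:ℝ) ^ L := heq
      _ ≤ (2:ℝ) ^ ((2 * r : ℕ) : ℝ) := Real.rpow_le_rpow_of_exponent_le one_le_two h2r
      _ = (2:ℝ) ^ (2 * r : ℕ) := Real.rpow_natCast 2 (2 * r)
      _ = 4 ^ r := by rw [pow_mul]; norm_num
  have hεpos : (0:ℝ) < 1 / (4 * (m:ℝ) + 1) := by positivity
  have hεle : 1 / (4 * (m:ℝ) + 1) ≤ 1 := by
    rw [div_le_one (by linarith)]; linarith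
  have hE0 : (0:ℝ) < 2 ^ (n * (n + 1) * r) := by positivity
  -- main facts for z in [1, 2^n]
  have main : ∀ z : ℝ, 1 ≤ z → z ≤ (2:ℝ) ^ n →
      (1 ≤ Sfn n r z ∧ Sfn n r z ≤ 1 + 1 / (2 * m)) ∧
      ((1 - 1 / (4 * m + 1)) * 2 ^ (n * (n + 1) * r) ≤ Bpoly n r z ∧ 0 < Bpoly n r z) := by
    intro z hz1 hz2
    have hz0 : (0:ℝ) ≤ z := by linarith
    set D : ℝ := (z + 1) * ∏ i ∈ Finset.Icc 1 n, (z + 2 ^ i) ^ 2 with hD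
    have hPN : 0 ≤ Ppoly n z := P_nonneg n z hz1
    have hr4 : 4 * Ppoly n z ≤ D := ratio n z hz1 hz2
    have hDE : (2:ℝ) ^ (n * (n + 1)) ≤ D := Q_ge n z hz0
    have hDpos : (0:ℝ) < D := lt_of_lt_of_le (by positivity) hDE
    set a : ℝ := Ppoly n z ^ r with ha
    set d : ℝ := D ^ r with hd
    have hdpos : (0:ℝ) < d := pow_pos hDpos r
    have ha0 : (0:ℝ) ≤ a := pow_nonneg hPN r
    have hEd : (2:ℝ) ^ (n * (n + 1) * r) ≤ d := by
      rw [pow_mul]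
      exact pow_le_pow_left₀ (by positivity) hDE r
    have had : (4 * (m:ℝ) + 1) * a ≤ d := by
      have h1 : Ppoly n z ≤ D / 4 := by linarith
      have h2 : a ≤ (D / 4) ^ r := pow_le_pow_left₀ hPN h1 r
      have h3 : (D / 4) ^ r = d / 4 ^ r := by rw [hd, div_pow]
      have h4 : d / 4 ^ r ≤ d / (4 * (m:ℝ) + 1) :=
        div_le_div_of_nonneg_left hdpos.le (by linarith) hpow
      have h5 : a ≤ d / (4 * (m:ℝ) + 1) := by rw [h3] at h2; linarith
      exact (le_div_iff₀' (by linarith)).mp h5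
    have hBz : Bpoly n r z = d - a := by
      unfold Bpoly
      rw [P_neg, hodd.neg_pow, ← hD, ← ha, ← hd]; ring
    have hAz : Apoly n r z = a + d := by
      unfold Apoly
      rw [P_neg, hodd.neg_pow, ← hD, ← ha, ← hd]; ring
    clear_value a d D
    have hda : a < d := by
      rcases eq_or_lt_of_le ha0 with h | h
      · linarith
      · nlinarith [mul_pos (show (0:ℝ) < 4 * (m:ℝ) by linarith) h, had]
    have hBpos : 0 < Bpoly n r z := by rw [hBz]; linarith
    have hS : Sfn n r z = (a + d) / (d - a) := by unfold Sfn; rw [hAz, hBz]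
    refine ⟨⟨?_, ?_⟩, ?_, hBpos⟩
    · rw [hS, le_div_iff₀ (by linarith)]; linarith
    · rw [hS, div_le_iff₀ (by linarith)]
      have h2m : (0:ℝ) < 2 * (m:ℝ) := by linarith
      have hmul : (2 * (m:ℝ)) * ((1 + 1 / (2 * (m:ℝ))) * (d - a)) = (2 * m + 1) * (d - a) := by
        field_simp
      have h5 : 2 * (m:ℝ) * (a + d) ≤ (2 * (m:ℝ) + 1) * (d - a) := by nlinarith
      exact le_of_mul_le_mul_left (by rw [hmul]; linarith) h2m
    · rw [hBz]
      have h41 : (0:ℝ) < 4 * (m:ℝ) + 1 := by linarith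
      have h6 : a ≤ 1 / (4 * (m:ℝ) + 1) * d := by
        have h7 : (4 * (m:ℝ) + 1) * a ≤ (4 * (m:ℝ) + 1) * (1 / (4 * (m:ℝ) + 1) * d) := by
          rw [show (4 * (m:ℝ) + 1) * (1 / (4 * (m:ℝ) + 1) * d) = d by field_simp]
          exact had
        exact le_of_mul_le_mul_left h7 h41
      calc (1 - 1 / (4 * (m:ℝ) + 1)) * 2 ^ (n * (n + 1) * r)
          ≤ (1 - 1 / (4 * (m:ℝ) + 1)) * d :=
            mul_le_mul_of_nonneg_left hEd (by linarith)
        _ ≤ d - a := by linarith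
  -- facts for z in [0, 1]
  have mid : ∀ z : ℝ, 0 ≤ z → z ≤ 1 →
      (|Sfn n r z| ≤ 1) ∧
      ((1 - 1 / (4 * m + 1)) * 2 ^ (n * (n + 1) * r) ≤ Bpoly n r z ∧ 0 < Bpoly n r z) := by
    intro z hz0 hz1
    set D : ℝ := (z + 1) * ∏ i ∈ Finset.Icc 1 n, (z + 2 ^ i) ^ 2 with hD
    have hDE : (2:ℝ) ^ (n * (n + 1)) ≤ D := Q_ge n z hz0
    have hDpos : (0:ℝ) < D := lt_of_lt_of_le (by positivity) hDE
    set a : ℝ := Ppoly n z ^ r with ha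
    set d : ℝ := D ^ r with hd
    have hdpos : (0:ℝ) < d := pow_pos hDpos r
    have ha0 : a ≤ 0 := hodd.pow_nonpos (P_nonpos n z hz1)
    have hEd : (2:ℝ) ^ (n * (n + 1) * r) ≤ d := by
      rw [pow_mul]
      exact pow_le_pow_left₀ (by positivity) hDE r
    have hBz : Bpoly n r z = d - a := by
      unfold Bpoly
      rw [P_neg, hodd.neg_pow, ← hD, ← ha, ← hd]; ring
    have hAz : Apoly n r z = a + d := by
      unfold Apoly
      rw [P_neg, hodd.neg_pow, ← hD, ← ha, ← hd]; ring
    clear_value a d D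
    have hBpos : 0 < Bpoly n r z := by rw [hBz]; linarith
    refine ⟨?_, ?_, hBpos⟩
    · have hS : Sfn n r z = (a + d) / (d - a) := by unfold Sfn; rw [hAz, hBz]
      rw [hS, abs_div, abs_of_pos (by linarith : (0:ℝ) < d - a), div_le_one (by linarith)]
      rw [abs_le]; constructor <;> linarith
    · rw [hBz]
      have h8 : (1 - 1 / (4 * (m:ℝ) + 1)) * 2 ^ (n * (n + 1) * r) ≤ 2 ^ (n * (n + 1) * r) :=
        mul_le_of_le_one_left hE0.le (by linarith)
      linarith
  refine ⟨?_, ?_, ?_, ?_⟩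
  · intro z hz
    obtain ⟨⟨h1, h2⟩, _⟩ := main z hz.1 hz.2
    exact ⟨h1, h2⟩
  · intro z hz
    obtain ⟨hz1, hz2⟩ := hz
    obtain ⟨⟨h1, h2⟩, _⟩ := main (-z) (by linarith) (by linarith)
    have hSodd : Sfn n r z = -Sfn n r (-z) := by
      rw [← S_odd, neg_neg]
    rw [hSodd]
    exact ⟨by linarith, by linarith⟩
  · intro z hz
    obtain ⟨hz1, hz2⟩ := hz
    rcases le_total 0 z with h | h
    · exact (mid z h hz2).1
    · have h3 := (mid (-z) (by linarith) (by linarith)).1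
      rw [show z = -(-z) by ring, S_odd, abs_neg]
      exact h3
  · intro z hz
    obtain ⟨hz1, hz2⟩ := hz
    have pos : ∀ w : ℝ, 0 ≤ w → w ≤ (2:ℝ) ^ n →
        (1 - 1 / (4 * m + 1)) * 2 ^ (n * (n + 1) * r) ≤ Bpoly n r w ∧ 0 < Bpoly n r w := by
      intro w hw0 hw2
      rcases le_total w 1 with h' | h'
      · exact (mid w hw0 h').2
      · exact (main w h' hw2).2
    rcases le_total 0 z with h | h
    · exact pos z h hz2
    · have := pos (-z) (by linarith) (by linarith)
      rwa [B_even] at this
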